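/- Let ‖·‖_* be a C¹ norm on ℝ^d, E ⊆ ℝ^d, α > 0, and G ⊂ ℝ^d a countable set. Suppose that for every L > 0, every choice z₁,…,z_k ∈ G, and every subset F' ⊆ E with packing dimension at least (packing dimension of E) − α, there exists x ∈ F' with |det-volume of (∇p_{z₁}(x), …, ∇p_{z_k}(x))| < L (i.e., E is not (α,k)-transversal with respect to G). Then there exists F ⊆ E with packing dimension of F equal to that of E such that the k vectors ∇p_{z₁}(x), …, ∇p_{z_k}(x) are linearly dependent for every choice z₁,…,z_k ∈ G and every x ∈ F. -/

import Mathlib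

open Filter Set Metric Bornology

/-- Minimal number of δ-balls needed to cover `E`. -/
noncomputable def coveringNumber {X : Type*} [PseudoMetricSpace X] (E : Set X) (δ : ℝ) : ℕ :=
  sInf {n : ℕ | ∃ s : Finset X, s.card = n ∧ E ⊆ ⋃ x ∈ s, Metric.ball x δ}

/-- Upper box dimension: limsup of log N(E,δ) / (-log δ) as δ → 0⁺. -/
noncomputable def ubdim {X : Type*} [PseudoMetricSpace X] (E : Set X) : ℝ :=
  Filter.limsup (fun δ : ℝ => Real.log (coveringNumber E δ) / (-Real.log δ))
    (nhdsWithin 0 (Set.Ioi 0))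

/-- Packing dimension via countable covers by bounded sets. -/
noncomputable def pdim {X : Type*} [PseudoMetricSpace X] (E : Set X) : ℝ :=
  sInf {a : ℝ | ∃ C : ℕ → Set X, (E ⊆ ⋃ i, C i) ∧ (∀ i, IsBounded (C i)) ∧
    ∀ i, ubdim (C i) ≤ a}

/-- `ν` is a norm on `ℝ^d`. -/
structure IsNorm {d : ℕ} (ν : EuclideanSpace ℝ (Fin d) → ℝ) : Prop where
  eq_zero_iff : ∀ x, ν x = 0 ↔ x = 0
  smul_eq : ∀ (c : ℝ) (x), ν (c • x) = |c| * ν x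
  add_le : ∀ x y, ν (x + y) ≤ ν x + ν y

/-- `k`-dimensional volume of the parallelepiped spanned by `u 1, …, u k`,
computed as the square root of the Gram determinant. -/
noncomputable def gramVol {d k : ℕ} (u : Fin k → EuclideanSpace ℝ (Fin d)) : ℝ :=
  Real.sqrt (Matrix.det (Matrix.of fun i j => (inner ℝ (u i) (u j) : ℝ)))

/-!
Let `F ⊆ E` be the set of points at which every `k`-tuple of gradients `∇p_z`, `z ∈ Gᵏ`, is
linearly dependent. At a point of `E \ F` some Gram volume is positive, hence at least `1/(n+1)`
for some `n`, so `E \ F` is covered by countably many sets on which a fixed Gram volume is bounded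
below. None of these can be transversal, so each has packing dimension `< dim_P E - α`. By countable
stability of packing dimension, `dim_P E ≤ max (dim_P F) (dim_P E - α)`, which forces
`dim_P F = dim_P E`.
-/

open Topology

section UpperBoxDimension

variable {X : Type*} [PseudoMetricSpace X]

lemma eventually_nonneg_log_coveringNumber_div (C : Set X) :
    ∀ᶠ δ : ℝ in 𝓝[>] 0, 0 ≤ Real.log (coveringNumber C δ) / (-Real.log δ) := by
  filter_upwards [Ioo_mem_nhdsGT zero_lt_one] with δ hδ
  exact div_nonneg (Real.log_natCast_nonneg _) (neg_nonneg.2 (Real.log_nonpos hδ.1.le hδ.2.le))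

lemma ubdim_nonneg (C : Set X) : 0 ≤ ubdim C := by
  rw [ubdim, limsup_eq]
  refine Real.sInf_nonneg fun a (ha : ∀ᶠ δ in 𝓝[>] 0, _ ≤ a) => ?_
  obtain ⟨δ, hδa, hδ⟩ := (ha.and (eventually_nonneg_log_coveringNumber_div C)).exists
  exact hδ.trans hδa

lemma ubdim_le_of_eventually_le {C : Set X} {a : ℝ}
    (h : ∀ᶠ δ : ℝ in 𝓝[>] 0, Real.log (coveringNumber C δ) / (-Real.log δ) ≤ a) :
    ubdim C ≤ a :=
  limsup_le_of_le (isCoboundedUnder_le_of_eventually_le _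
    (eventually_nonneg_log_coveringNumber_div C)) h

lemma ubdim_le_of_coveringNumber_le_inv_pow {C : Set X} {s : ℕ}
    (h : ∀ᶠ δ : ℝ in 𝓝[>] 0, (coveringNumber C δ : ℝ) ≤ δ⁻¹ ^ s) : ubdim C ≤ s := by
  apply ubdim_le_of_eventually_le
  filter_upwards [h, Ioo_mem_nhdsGT zero_lt_one] with δ hN hδ
  have hlog : 0 < -Real.log δ := neg_pos.2 (Real.log_neg hδ.1 hδ.2)
  rw [div_le_iff₀ hlog]
  rcases (coveringNumber C δ).eq_zero_or_pos with h0 | hpos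
  · rw [h0, Nat.cast_zero, Real.log_zero]
    positivity
  · calc Real.log (coveringNumber C δ) ≤ Real.log (δ⁻¹ ^ s) :=
          Real.log_le_log (Nat.cast_pos.2 hpos) hN
      _ = s * (-Real.log δ) := by rw [Real.log_pow, Real.log_inv]

lemma coveringNumber_le_card {C : Set X} {δ : ℝ} {s : Finset X}
    (hs : C ⊆ ⋃ x ∈ s, ball x δ) : coveringNumber C δ ≤ s.card :=
  Nat.sInf_le ⟨s, rfl, hs⟩

end UpperBoxDimension

section PackingDimension

variable {X : Type*} [PseudoMetricSpace X]

def pdimBounds (A : Set X) : Set ℝ :=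
  {a : ℝ | ∃ C : ℕ → Set X, (A ⊆ ⋃ i, C i) ∧ (∀ i, IsBounded (C i)) ∧ ∀ i, ubdim (C i) ≤ a}

lemma pdim_eq_sInf_pdimBounds (A : Set X) : pdim A = sInf (pdimBounds A) := rfl

lemma pdimBounds_bddBelow (A : Set X) : BddBelow (pdimBounds A) :=
  ⟨0, fun _ ⟨C, _, _, hC⟩ => (ubdim_nonneg (C 0)).trans (hC 0)⟩

lemma mem_pdimBounds_of_le {A : Set X} {a b : ℝ} (ha : a ∈ pdimBounds A) (hab : a ≤ b) :
    b ∈ pdimBounds A :=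
  let ⟨C, hAC, hCb, hCa⟩ := ha
  ⟨C, hAC, hCb, fun i => (hCa i).trans hab⟩

lemma pdim_le_of_subset_iUnion {ι : Type*} [Countable ι] [Nonempty ι] {E : Set X}
    {A : ι → Set X} {a : ℝ} (hE : E ⊆ ⋃ i, A i) (hA : ∀ i, a ∈ pdimBounds (A i)) :
    pdim E ≤ a := by
  choose C hAC hCb hCa using hA
  obtain ⟨f, hf⟩ := exists_surjective_nat (ι × ℕ)
  rw [pdim_eq_sInf_pdimBounds]
  refine csInf_le (pdimBounds_bddBelow E)
    ⟨fun m => C (f m).1 (f m).2, fun x hx => ?_, fun m => hCb _ _, fun m => hCa _ _⟩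
  obtain ⟨i, hxi⟩ := mem_iUnion.1 (hE hx)
  obtain ⟨j, hxj⟩ := mem_iUnion.1 (hAC i hxi)
  obtain ⟨m, hm⟩ := hf (i, j)
  exact mem_iUnion.2 ⟨m, by rwa [hm]⟩

end PackingDimension

section Euclidean

variable {ι : Type*} [Fintype ι]

lemma EuclideanSpace.dist_le_card_mul {x y : EuclideanSpace ℝ ι} {r : ℝ} (hr : 0 ≤ r)
    (h : ∀ i, dist (x i) (y i) ≤ r) : dist x y ≤ Fintype.card ι * r := by
  have hcard : (Fintype.card ι : ℝ) ≤ (Fintype.card ι : ℝ) ^ 2 := by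
    exact_mod_cast Nat.le_self_pow two_ne_zero _
  rw [EuclideanSpace.dist_eq, Real.sqrt_le_left (by positivity)]
  calc ∑ i, dist (x i) (y i) ^ 2 ≤ ∑ _i : ι, r ^ 2 :=
        Finset.sum_le_sum fun i _ => pow_le_pow_left₀ dist_nonneg (h i) 2
    _ = Fintype.card ι * r ^ 2 := by simp
    _ ≤ (Fintype.card ι * r) ^ 2 := by rw [mul_pow]; gcongr

noncomputable def gridPoint (h : ℝ) (v : ι → ℤ) : EuclideanSpace ℝ ι :=
  WithLp.toLp 2 fun i => h * v i

lemma dist_gridPoint_round_le {h : ℝ} (hh : 0 < h) (x : EuclideanSpace ℝ ι) :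
    dist x (gridPoint h fun i => round (x i / h)) ≤ Fintype.card ι * (h / 2) := by
  refine EuclideanSpace.dist_le_card_mul (by positivity) fun i => ?_
  have hround := abs_sub_round (x i / h)
  have hsub : x i - h * round (x i / h) = h * (x i / h - round (x i / h)) := by field_simp
  calc dist (x i) (h * round (x i / h)) = h * |x i / h - round (x i / h)| := by
        rw [Real.dist_eq, hsub, abs_mul, abs_of_pos hh]
    _ ≤ h * (1 / 2) := by gcongr
    _ = h / 2 := by ring

/-- Cover by the `δ`-balls around the points of the lattice of mesh `δ / (card ι + 1)` in the
cube `[-R, R]^ι`. -/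
lemma coveringNumber_le_of_subset_ball {C : Set (EuclideanSpace ℝ ι)} {R δ : ℝ}
    (hC : C ⊆ ball 0 R) (hδ : 0 < δ) :
    coveringNumber C δ ≤ (2 * ⌈R * (Fintype.card ι + 1) / δ⌉₊ + 1) ^ Fintype.card ι := by
  classical
  set n : ℝ := ((Fintype.card ι : ℕ) : ℝ)
  have hn : 0 ≤ n := Nat.cast_nonneg _
  set h : ℝ := δ / (n + 1) with hh_def
  have hh : 0 < h := by positivity
  set M : ℕ := ⌈R * (n + 1) / δ⌉₊
  have hRM : R / h ≤ M := by
    rw [hh_def, div_div_eq_mul_div]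
    exact Nat.le_ceil _
  set box := Fintype.piFinset fun _ : ι => Finset.Icc (-(M : ℤ)) M
  have hcover : C ⊆ ⋃ x ∈ box.image (gridPoint h), ball x δ := by
    intro x hx
    have hxR : ‖x‖ < R := mem_ball_zero_iff.1 (hC hx)
    refine mem_biUnion (Finset.mem_image_of_mem (gridPoint h) (a := fun i => round (x i / h))
      (Fintype.mem_piFinset.2 fun i => ?_)) ?_
    · have hxi : |x i / h| < M := by
        rw [abs_div, abs_of_pos hh, div_lt_iff₀ hh]
        calc |x i| ≤ ‖x‖ := by simpa using PiLp.norm_apply_le x i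
          _ < R := hxR
          _ ≤ M * h := (div_le_iff₀ hh).1 hRM
      have hround := abs_sub_round (x i / h)
      rw [abs_lt] at hxi
      rw [abs_le] at hround
      have hlo : -(M : ℤ) - 1 < round (x i / h) := by
        exact_mod_cast (show -(M : ℝ) - 1 < round (x i / h) by linarith)
      have hhi : round (x i / h) < (M : ℤ) + 1 := by
        exact_mod_cast (show (round (x i / h) : ℝ) < M + 1 by linarith)
      rw [Finset.mem_Icc]
      omega
    · rw [mem_ball]
      calc dist x (gridPoint h _) ≤ n * (h / 2) := dist_gridPoint_round_le hh x
        _ < δ := by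
            rw [hh_def, div_div, mul_div_assoc', div_lt_iff₀ (by positivity)]
            nlinarith [mul_nonneg hn hδ.le]
  calc coveringNumber C δ ≤ (box.image (gridPoint h)).card := coveringNumber_le_card hcover
    _ ≤ box.card := Finset.card_image_le
    _ = (2 * M + 1) ^ Fintype.card ι := by
        rw [Fintype.card_piFinset, Finset.prod_const, Finset.card_univ, Int.card_Icc]
        congr 1
        omega

lemma ubdim_le_of_isBounded {C : Set (EuclideanSpace ℝ ι)} (hC : IsBounded C) :
    ubdim C ≤ Fintype.card ι + 1 := by
  obtain ⟨R, hR, hCR⟩ := hC.subset_ball_lt 0 0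
  set n := Fintype.card ι
  set K : ℝ := 2 * R * (n + 1) + 3
  have hK : 0 < K := by positivity
  have hsmall : ∀ᶠ δ : ℝ in 𝓝[>] 0, (coveringNumber C δ : ℝ) ≤ δ⁻¹ ^ (n + 1) := by
    filter_upwards [Ioo_mem_nhdsGT (lt_min zero_lt_one (inv_pos.2 (pow_pos hK n)))] with δ hδ
    have hδ1 : δ ≤ 1 := hδ.2.le.trans (min_le_left _ _)
    have hKδ : K ^ n ≤ δ⁻¹ := le_inv_of_le_inv₀ hδ.1 (hδ.2.le.trans (min_le_right _ _))
    have hbase : ((2 * ⌈R * (n + 1) / δ⌉₊ + 1 : ℕ) : ℝ) ≤ K * δ⁻¹ := by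
      have hceil := Nat.ceil_lt_add_one (a := R * (n + 1) / δ) (div_nonneg (by positivity) hδ.1.le)
      have hδinv : 1 ≤ δ⁻¹ := one_le_inv₀ hδ.1 |>.2 hδ1
      push_cast
      calc 2 * (⌈R * (n + 1) / δ⌉₊ : ℝ) + 1 ≤ 2 * (R * (n + 1) / δ + 1) + 1 := by linarith
        _ ≤ K * δ⁻¹ := by rw [div_eq_mul_inv]; nlinarith
    calc (coveringNumber C δ : ℝ) ≤ ((2 * ⌈R * (n + 1) / δ⌉₊ + 1 : ℕ) : ℝ) ^ n := by
          exact_mod_cast coveringNumber_le_of_subset_ball hCR hδ.1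
      _ ≤ (K * δ⁻¹) ^ n := by gcongr
      _ = K ^ n * δ⁻¹ ^ n := mul_pow _ _ _
      _ ≤ δ⁻¹ * δ⁻¹ ^ n := mul_le_mul_of_nonneg_right hKδ (pow_nonneg (inv_nonneg.2 hδ.1.le) n)
      _ = δ⁻¹ ^ (n + 1) := (pow_succ' _ _).symm
  exact_mod_cast ubdim_le_of_coveringNumber_le_inv_pow hsmall

lemma pdimBounds_nonempty (A : Set (EuclideanSpace ℝ ι)) : (pdimBounds A).Nonempty := by
  refine ⟨Fintype.card ι + 1, fun i => ball 0 (i + 1), fun x _ => ?_, fun _ => isBounded_ball,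
    fun _ => ubdim_le_of_isBounded isBounded_ball⟩
  obtain ⟨i, hi⟩ := exists_nat_gt ‖x‖
  exact mem_iUnion.2 ⟨i, mem_ball_zero_iff.2 (by linarith)⟩

lemma pdim_mono {A B : Set (EuclideanSpace ℝ ι)} (h : A ⊆ B) : pdim A ≤ pdim B := by
  rw [pdim_eq_sInf_pdimBounds, pdim_eq_sInf_pdimBounds]
  exact csInf_le_csInf (pdimBounds_bddBelow A) (pdimBounds_nonempty B)
    fun _ ⟨C, hBC, hCb, hCa⟩ => ⟨C, h.trans hBC, hCb, hCa⟩

lemma mem_pdimBounds_of_pdim_lt {A : Set (EuclideanSpace ℝ ι)} {a : ℝ} (h : pdim A < a) :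
    a ∈ pdimBounds A := by
  rw [pdim_eq_sInf_pdimBounds, csInf_lt_iff (pdimBounds_bddBelow A) (pdimBounds_nonempty A)] at h
  obtain ⟨b, hb, hba⟩ := h
  exact mem_pdimBounds_of_le hb hba.le

lemma pdim_le_of_subset_union_iUnion {κ : Type*} [Countable κ] {E F : Set (EuclideanSpace ℝ ι)}
    {A : κ → Set (EuclideanSpace ℝ ι)} {b : ℝ} (hE : E ⊆ F ∪ ⋃ i, A i)
    (hA : ∀ i, pdim (A i) ≤ b) (hb : b < pdim E) : pdim E ≤ pdim F := by
  by_contra! hF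
  obtain ⟨a, hFa, haE⟩ := exists_between (max_lt hF hb)
  have hpieces : ∀ o : Option κ, a ∈ pdimBounds (o.elim F A) := by
    rintro (_ | i)
    · exact mem_pdimBounds_of_pdim_lt ((le_max_left _ _).trans_lt hFa)
    · exact mem_pdimBounds_of_pdim_lt ((hA i).trans_lt ((le_max_right _ _).trans_lt hFa))
  exact haE.not_ge (pdim_le_of_subset_iUnion (by rwa [iUnion_option]) hpieces)

end Euclidean

lemma gramVol_pos {d k : ℕ} {u : Fin k → EuclideanSpace ℝ (Fin d)}
    (h : LinearIndependent ℝ u) : 0 < gramVol u :=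
  Real.sqrt_pos.2 (Matrix.posDef_gram_of_linearIndependent h).det_pos

theorem stmt14_general {d k : ℕ}
    (gradp : EuclideanSpace ℝ (Fin d) → EuclideanSpace ℝ (Fin d) → EuclideanSpace ℝ (Fin d))
    (E : Set (EuclideanSpace ℝ (Fin d))) (α : ℝ) (hα : 0 < α)
    (G : Set (EuclideanSpace ℝ (Fin d))) (hG : G.Countable)
    (hnt : ∀ L > (0:ℝ), ∀ z : Fin k → EuclideanSpace ℝ (Fin d), (∀ ℓ, z ℓ ∈ G) →
      ∀ F' ⊆ E, pdim E - α ≤ pdim F' →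
        ∃ x ∈ F', gramVol (fun ℓ => gradp (z ℓ) x) < L) :
    ∃ F ⊆ E, pdim F = pdim E ∧
      ∀ z : Fin k → EuclideanSpace ℝ (Fin d), (∀ ℓ, z ℓ ∈ G) →
        ∀ x ∈ F, ¬ LinearIndependent ℝ (fun ℓ => gradp (z ℓ) x) := by
  set Z := {z : Fin k → EuclideanSpace ℝ (Fin d) | ∀ ℓ, z ℓ ∈ G}
  have : Countable Z := (countable_pi fun _ => hG).to_subtype
  set F := {x ∈ E | ∀ z ∈ Z, ¬ LinearIndependent ℝ (fun ℓ => gradp (z ℓ) x)}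
  set A : Z × ℕ → Set (EuclideanSpace ℝ (Fin d)) := fun p =>
    {x ∈ E | 1 / ((p.2 : ℝ) + 1) ≤
      gramVol (fun ℓ => gradp ((p.1 : Fin k → EuclideanSpace ℝ (Fin d)) ℓ) x)}
  have hA : ∀ p, pdim (A p) ≤ pdim E - α := fun p => by
    by_contra! h
    obtain ⟨x, hxA, hx⟩ := hnt _ Nat.one_div_pos_of_nat p.1 p.1.2 (A p) (sep_subset _ _) h.le
    exact hx.not_ge hxA.2
  have hcover : E ⊆ F ∪ ⋃ p, A p := fun x hxE => by
    by_cases hxF : x ∈ F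
    · exact Or.inl hxF
    obtain ⟨z, hz, hli⟩ : ∃ z ∈ Z, LinearIndependent ℝ (fun ℓ => gradp (z ℓ) x) := by
      simpa [F, hxE] using hxF
    obtain ⟨n, hn⟩ := exists_nat_one_div_lt (gramVol_pos hli)
    exact Or.inr (mem_iUnion.2 ⟨(⟨z, hz⟩, n), hxE, hn.le⟩)
  refine ⟨F, sep_subset _ _, le_antisymm (pdim_mono (sep_subset _ _)) ?_,
    fun z hz x hx => hx.2 z hz⟩
  exact pdim_le_of_subset_union_iUnion hcover hA (sub_lt_self _ hα)

theorem stmt14 {d k : ℕ} (ν : EuclideanSpace ℝ (Fin d) → ℝ) (hν : IsNorm ν)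
    (hC1 : ContDiffOn ℝ 1 ν {(0 : EuclideanSpace ℝ (Fin d))}ᶜ)
    (gradp : EuclideanSpace ℝ (Fin d) → EuclideanSpace ℝ (Fin d) → EuclideanSpace ℝ (Fin d))
    (hgrad : ∀ z x, x ≠ z → HasGradientAt (fun y => ν (y - z)) (gradp z x) x)
    (E : Set (EuclideanSpace ℝ (Fin d))) (α : ℝ) (hα : 0 < α)
    (G : Set (EuclideanSpace ℝ (Fin d))) (hG : G.Countable)
    (hnt : ∀ L > (0:ℝ), ∀ z : Fin k → EuclideanSpace ℝ (Fin d), (∀ ℓ, z ℓ ∈ G) →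
      ∀ F' ⊆ E, pdim E - α ≤ pdim F' →
        ∃ x ∈ F', gramVol (fun ℓ => gradp (z ℓ) x) < L) :
    ∃ F ⊆ E, pdim F = pdim E ∧
      ∀ z : Fin k → EuclideanSpace ℝ (Fin d), (∀ ℓ, z ℓ ∈ G) →
        ∀ x ∈ F, ¬ LinearIndependent ℝ (fun ℓ => gradp (z ℓ) x) :=
  stmt14_general gradp E α hα G hG hnt
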